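/- arXiv:1802.03295 — 13 statements merged into one kernel-verified Lean document; each statement's English description precedes it below -/
import Mathlib

section
/- Let (X, ⟨under⟩*, ⟨over⟩*) be a biquandle. Define x * y := (x ⟨under⟩* y) ⟨over⟩*^{-1} y, where ⟨over⟩*^{-1} y denotes the inverse of the bijection x ↦ x ⟨over⟩* y. Then (X, *) is a quandle. -/
structure Biquandle (X : Type*) where
  nonempty : Nonempty X
  u : X → X → X
  o : X → X → X
  diag : ∀ x, u x x = o x x
  uBij : ∀ y, Function.Bijective fun x => u x y
  oBij : ∀ y, Function.Bijective fun x => o x y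
  SBij : Function.Bijective fun p : X × X => (o p.2 p.1, u p.1 p.2)
  ex1 : ∀ x y z, u (u x y) (u z y) = u (u x z) (o y z)
  ex2 : ∀ x y z, o (u x y) (u z y) = u (o x z) (o y z)
  ex3 : ∀ x y z, o (o x y) (o z y) = o (o x z) (u y z)

/-- For a biquandle `(X, ⟨under⟩*, ⟨over⟩*)`, the operation
`x * y = (x ⟨under⟩* y) ⟨over⟩*⁻¹ y` makes `X` a quandle. -/
theorem stmt_1 {X : Type*} (B : Biquandle X)
    (oi : X → X → X)
    (hoi₁ : ∀ x y, B.o (oi x y) y = x)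
    (hoi₂ : ∀ x y, oi (B.o x y) y = x)
    (q : X → X → X) (hq : ∀ x y, q x y = oi (B.u x y) y) :
    (∀ x, q x x = x) ∧
    (∀ y, Function.Bijective fun x => q x y) ∧
    (∀ x y z, q (q x y) z = q (q x z) (q y z)) := by
  have key : ∀ a b, B.o (q a b) b = B.u a b := fun a b => by rw [hq, hoi₁]
  refine ⟨?_, ?_, ?_⟩
  · intro x; rw [hq, B.diag, hoi₂]
  · intro y
    have hb : Function.Bijective fun x => oi x y :=
      Function.bijective_iff_has_inverse.mpr
        ⟨fun x => B.o x y, fun x => hoi₁ x y, fun x => hoi₂ x y⟩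
    have hcomp : (fun x => q x y) = (fun x => oi x y) ∘ (fun x => B.u x y) := by
      funext x; simp [hq]
    rw [hcomp]
    exact hb.comp (B.uBij y)
  · intro x y z
    have h1 : B.o (B.o (q (q x y) z) (q y z)) (B.u z (q y z))
        = B.u (B.u x y) (B.o z y) := by
      rw [← B.ex3 (q (q x y) z) z (q y z), key (q x y) z, key y z,
        B.ex2 (q x y) z y, key x y]
    have h2 : B.o (B.u (q x z) (q y z)) (B.u z (q y z))
        = B.u (B.u x y) (B.o z y) := by
      rw [B.ex2 (q x z) (q y z) z, key x z, key y z, B.ex1 x z y]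
    have h3 : B.o (q (q x y) z) (q y z) = B.u (q x z) (q y z) :=
      (B.oBij (B.u z (q y z))).injective (h1.trans h2.symm)
    rw [hq (q x z) (q y z), ← h3, hoi₂]
end

section
/- Let X be an Alexander biquandle of finite type (an R[s^{±1},t^{±1}]-module with a ⟨under⟩* b = t·a + (s−t)·b, a ⟨over⟩* b = s·a). Then the type of the quandle Q(X) (the Alexander quandle with x * y = s^{-1}t·x + (1 − s^{-1}t)·y) divides the type of X. -/
/-- For an Alexander biquandle `X` of finite type (module over a commutative ring `A`
with units `s, t`; type = least `n > 0` with `tⁿ•a + (sⁿ−tⁿ)•b = a` and `sⁿ•a = a`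
for all `a, b`), the type of the associated Alexander quandle `Q(X)`
(`x * y = s⁻¹t•x + (1 − s⁻¹t)•y`; type = least `n > 0` with
`(s⁻¹t)ⁿ•x + (1 − (s⁻¹t)ⁿ)•y = x`) divides the type of `X`. -/
theorem stmt_4 {A : Type*} [CommRing A] (s t : Aˣ)
    {X : Type*} [AddCommGroup X] [Module A X]
    (m : ℕ)
    (hm : IsLeast {n : ℕ | 0 < n ∧ ∀ a b : X,
        ((t ^ n : Aˣ) : A) • a + (((s ^ n : Aˣ) : A) - ((t ^ n : Aˣ) : A)) • b = a ∧
        ((s ^ n : Aˣ) : A) • a = a} m) :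
    ∃ m' : ℕ,
      IsLeast {n : ℕ | 0 < n ∧ ∀ x y : X,
        (((s⁻¹ * t) ^ n : Aˣ) : A) • x + ((1 : A) - (((s⁻¹ * t) ^ n : Aˣ) : A)) • y = x} m' ∧
      m' ∣ m := by
  classical
  obtain ⟨⟨hm0, hmX⟩, _hmin⟩ := hm
  set u : Aˣ := s⁻¹ * t with hu
  -- the quandle condition is equivalent to u^n acting trivially
  have hP : ∀ n : ℕ,
      (∀ x y : X, ((u ^ n : Aˣ) : A) • x + ((1 : A) - ((u ^ n : Aˣ) : A)) • y = x)
      ↔ (∀ z : X, ((u ^ n : Aˣ) : A) • z = z) := by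
    intro n
    constructor
    · intro h z
      have := h z 0
      simpa using this
    · intro h x y
      rw [sub_smul, one_smul, h x, h y]
      abel
  have key : ∀ z : X, ((u ^ m : Aˣ) : A) • z = z := by
    intro z
    have ht : ((t ^ m : Aˣ) : A) • z = z := by
      have := (hmX z 0).1
      simpa using this
    have hs : ((s ^ m : Aˣ) : A) • z = z := (hmX z 0).2
    have hus : u ^ m * s ^ m = t ^ m := by
      rw [hu, mul_pow, mul_right_comm, ← mul_pow, inv_mul_cancel, one_pow, one_mul]
    calc ((u ^ m : Aˣ) : A) • z
        = ((u ^ m : Aˣ) : A) • (((s ^ m : Aˣ) : A) • z) := by rw [hs]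
      _ = ((t ^ m : Aˣ) : A) • z := by
          rw [← mul_smul, ← Units.val_mul, hus]
      _ = z := ht
  set P : ℕ → Prop := fun n => ∀ z : X, ((u ^ n : Aˣ) : A) • z = z with hPdef
  have hPadd : ∀ a b : ℕ, P a → P (a + b) → P b := by
    intro a b ha hab z
    have h1 : ((u ^ (a + b) : Aˣ) : A) • z = ((u ^ b : Aˣ) : A) • z := by
      rw [pow_add, Units.val_mul, mul_smul, ha]
    rw [← h1, hab]
  have hPmul : ∀ a k : ℕ, P a → P (k * a) := by
    intro a k ha
    induction k with
    | zero => intro z; simp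
    | succ k ih =>
      intro z
      rw [Nat.succ_mul, pow_add, Units.val_mul, mul_smul, ha, ih]
  have hne : ∃ n : ℕ, 0 < n ∧ P n := ⟨m, hm0, key⟩
  set m' := Nat.find hne with hm'def
  obtain ⟨hm'0, hm'P⟩ := Nat.find_spec hne
  have hdvd : m' ∣ m := by
    have hmod : P (m % m') := by
      have h1 : P (m' * (m / m')) := by rw [mul_comm]; exact hPmul m' (m / m') hm'P
      have h2 : P (m' * (m / m') + m % m') := by rw [Nat.div_add_mod]; exact key
      exact hPadd _ _ h1 h2
    by_cases hr : m % m' = 0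
    · exact Nat.dvd_of_mod_eq_zero hr
    · exfalso
      have h1 : m' ≤ m % m' := Nat.find_min' hne ⟨Nat.pos_of_ne_zero hr, hmod⟩
      have h2 : m % m' < m' := Nat.mod_lt m hm'0
      omega
  refine ⟨m', ⟨⟨hm'0, (hP m').mpr hm'P⟩, ?_⟩, hdvd⟩
  intro n hn
  exact Nat.find_min' hne ⟨hn.1, (hP n).mp hn.2⟩
end

section
/- The Alexander biquandle X = ℤ[s^{±1}, t^{±1}]/(s − t) has infinite type, while its associated quandle Q(X) has type 1. -/
/-!
In `X` the relation `s = t` gives `s⁻¹t = 1`, so the operation of `Q(X)` is `x * y = x` and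
`Q(X)` has type `1`. For the biquandle, taking `a = 1, b = 0` forces `tⁿ = 1` in `X`; but the
ring map `ℤ[s^{±1}, t^{±1}] → ℤ[T^{±1}]` with `s, t ↦ T` kills `s - t`, and `Tⁿ ≠ 1` for `n > 0`.
-/

/-- The Laurent polynomial ring `ℤ[s^{±1}, t^{±1}]` in two variables. -/
noncomputable abbrev LaurentTwo : Type := AddMonoidAlgebra ℤ (ℤ × ℤ)

/-- The variable `s`. -/
noncomputable def sVar : LaurentTwo := AddMonoidAlgebra.of' ℤ (ℤ × ℤ) (1, 0)

/-- The variable `t`. -/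
noncomputable def tVar : LaurentTwo := AddMonoidAlgebra.of' ℤ (ℤ × ℤ) (0, 1)

open AddMonoidAlgebra LaurentPolynomial

theorem AddMonoidAlgebra.isUnit_of' {k G : Type*} [Semiring k] [AddGroup G] (g : G) :
    IsUnit (of' k G g) :=
  (Group.isUnit (Multiplicative.ofAdd g)).map (of k G)

theorem LaurentPolynomial.T_eq_one_iff {R : Type*} [Semiring R] [Nontrivial R] {n : ℤ} :
    (T n : R[T;T⁻¹]) = 1 ↔ n = 0 := by
  rw [← T_zero]
  exact single_left_inj one_ne_zero

noncomputable def collapse : LaurentTwo →+* ℤ[T;T⁻¹] :=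
  mapDomainRingHom ℤ (AddMonoidHom.fst ℤ ℤ + AddMonoidHom.snd ℤ ℤ)

theorem collapse_of' (a b : ℤ) : collapse (of' ℤ (ℤ × ℤ) (a, b)) = T (a + b) := by
  simp [collapse, of'_apply, mapDomainRingHom_apply]

theorem collapse_sVar : collapse sVar = T 1 := by
  rw [sVar, collapse_of', add_zero]

theorem collapse_tVar : collapse tVar = T 1 := by
  rw [tVar, collapse_of', zero_add]

noncomputable def collapseQuot : LaurentTwo ⧸ Ideal.span {sVar - tVar} →+* ℤ[T;T⁻¹] :=
  Ideal.Quotient.lift _ collapse fun x hx => by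
    obtain ⟨c, rfl⟩ := Ideal.mem_span_singleton'.mp hx
    rw [map_mul, map_sub, collapse_sVar, collapse_tVar, sub_self, mul_zero]

theorem mk_tVar_pow_ne_one {n : ℕ} (hn : n ≠ 0) :
    Ideal.Quotient.mk (Ideal.span {sVar - tVar}) tVar ^ n ≠ 1 := fun h => by
  have hT : (T n : ℤ[T;T⁻¹]) = 1 := by
    simpa [collapseQuot, collapse_tVar, T_pow] using congrArg collapseQuot h
  exact hn (by exact_mod_cast T_eq_one_iff.mp hT)

theorem mk_sVar_eq_mk_tVar :
    Ideal.Quotient.mk (Ideal.span {sVar - tVar}) sVar = Ideal.Quotient.mk _ tVar :=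
  Ideal.Quotient.eq.mpr (Ideal.mem_span_singleton_self _)

theorem inverse_mk_sVar_mul_mk_tVar :
    Ring.inverse (Ideal.Quotient.mk (Ideal.span {sVar - tVar}) sVar) *
      Ideal.Quotient.mk _ tVar = 1 := by
  rw [← mk_sVar_eq_mk_tVar]
  exact Ring.inverse_mul_cancel _ ((isUnit_of' _).map _)

/-- The Alexander biquandle `X = ℤ[s^{±1},t^{±1}]/(s − t)` has infinite type
(no `n > 0` with `tⁿa + (sⁿ−tⁿ)b = a` and `sⁿa = a` for all `a, b ∈ X`),
while its associated quandle `Q(X)`, with `x * y = s⁻¹t·x + (1 − s⁻¹t)·y`,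
has type `1`. -/
theorem stmt_5 :
    (¬ ∃ n : ℕ, 0 < n ∧ ∀ a b : LaurentTwo ⧸ Ideal.span {sVar - tVar},
        (Ideal.Quotient.mk _ tVar) ^ n * a +
          ((Ideal.Quotient.mk _ sVar) ^ n - (Ideal.Quotient.mk _ tVar) ^ n) * b = a ∧
        (Ideal.Quotient.mk _ sVar) ^ n * a = a) ∧
    IsLeast {n : ℕ | 0 < n ∧ ∀ x y : LaurentTwo ⧸ Ideal.span {sVar - tVar},
        (Ring.inverse (Ideal.Quotient.mk _ sVar) * Ideal.Quotient.mk _ tVar) ^ n * x +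
          (1 - (Ring.inverse (Ideal.Quotient.mk _ sVar) * Ideal.Quotient.mk _ tVar) ^ n) * y
          = x} 1 := by
  refine ⟨?_, ?_⟩
  · rintro ⟨n, hn, h⟩
    have htn := (h 1 0).1
    rw [mul_one, mul_zero, add_zero] at htn
    exact mk_tVar_pow_ne_one hn.ne' htn
  · rw [inverse_mk_sVar_mul_mk_tVar]
    exact ⟨⟨one_pos, fun x y => by simp⟩, fun n hn => hn.1⟩
end

section
/- The Alexander biquandle X = ℤ[s^{±1}, t^{±1}]/(s + t, t^4 − 1) has type 4, while its associated quandle Q(X) has type 2. -/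
/-! In `X` we have `s = -t` and `t⁴ = 1`, hence `s⁻¹t = -1`. Evaluating the defining identities at
`(a, b) = (1, 0)` shows that the biquandle type is the order of `(t, s)` in `X × X` and the quandle
type is the order of `s⁻¹t = -1`. The ring map `X → ℤ/5` with `t ↦ 2`, `s ↦ -2` gives `t² ≠ 1` and
`-1 ≠ 1`, so these orders are `4` and `2`. -/

theorem isLeast_of_orderOf_eq {M : Type*} [Monoid M] {x : M} {k : ℕ} (hx : orderOf x = k)
    (hk : 0 < k) : IsLeast {n | 0 < n ∧ x ^ n = 1} k := by
  subst hx
  exact ⟨⟨hk, pow_orderOf_eq_one x⟩, fun n ⟨hn, hxn⟩ => orderOf_le_of_pow_eq_one hn hxn⟩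

theorem biquandle_identity_iff {R : Type*} [Ring R] (s t : R) (n : ℕ) :
    (∀ a b : R, t ^ n * a + (s ^ n - t ^ n) * b = a ∧ s ^ n * a = a) ↔ (t, s) ^ n = 1 := by
  refine ⟨fun h => ?_, fun h a b => ?_⟩
  · obtain ⟨ht, hs⟩ := h 1 0
    simp only [mul_one, mul_zero, add_zero] at ht hs
    exact Prod.ext ht hs
  · obtain ⟨ht, hs⟩ := Prod.ext_iff.mp h
    simp only [Prod.pow_fst, Prod.pow_snd, Prod.fst_one, Prod.snd_one] at ht hs
    simp [ht, hs]

theorem quandle_identity_iff {R : Type*} [Ring R] (u : R) (n : ℕ) :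
    (∀ x y : R, u ^ n * x + (1 - u ^ n) * y = x) ↔ u ^ n = 1 := by
  refine ⟨fun h => by simpa using h 1 0, fun h x y => by simp [h]⟩

section LaurentEval

variable {R : Type*} [CommRing R]

noncomputable def laurentEval (u v : Rˣ) : LaurentTwo →+* R :=
  (AddMonoidAlgebra.lift ℤ R (ℤ × ℤ)
    ((Units.coeHom R).comp
      { toFun := fun x => u ^ x.toAdd.1 * v ^ x.toAdd.2
        map_one' := by simp
        map_mul' := fun x y => by
          simp only [toAdd_mul, Prod.fst_add, Prod.snd_add, zpow_add]
          exact mul_mul_mul_comm _ _ _ _ })).toRingHom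

@[simp]
theorem laurentEval_sVar (u v : Rˣ) : laurentEval u v sVar = u := by
  simp [laurentEval, sVar]

@[simp]
theorem laurentEval_tVar (u v : Rˣ) : laurentEval u v tVar = v := by
  simp [laurentEval, tVar]

end LaurentEval

noncomputable abbrev alexanderIdeal : Ideal LaurentTwo := Ideal.span {sVar + tVar, tVar ^ 4 - 1}

local notation "𝐬" => Ideal.Quotient.mk alexanderIdeal sVar
local notation "𝐭" => Ideal.Quotient.mk alexanderIdeal tVar

section AlexanderEval

variable {R : Type*} [CommRing R]

noncomputable def alexanderEval (v : Rˣ) (hv : v ^ 4 = 1) :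
    LaurentTwo ⧸ alexanderIdeal →+* R :=
  Ideal.Quotient.lift _ (laurentEval (-v) v) fun a ha => RingHom.mem_ker.mp <| by
    refine (Ideal.span_le (I := RingHom.ker _)).mpr ?_ ha
    rintro x (rfl | rfl)
    · simp
    · simp [← Units.val_pow_eq_pow_val, hv]

theorem alexanderEval_mk_tVar (v : Rˣ) (hv : v ^ 4 = 1) : alexanderEval v hv 𝐭 = v := by
  rw [alexanderEval, Ideal.Quotient.lift_mk, laurentEval_tVar]

end AlexanderEval

theorem mk_sVar_eq_neg : 𝐬 = -𝐭 := by
  rw [eq_neg_iff_add_eq_zero, ← map_add, Ideal.Quotient.eq_zero_iff_mem]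
  exact Ideal.subset_span (Set.mem_insert _ _)

theorem mk_tVar_pow_four : 𝐭 ^ 4 = 1 := by
  rw [← sub_eq_zero, ← map_pow, ← map_one (Ideal.Quotient.mk _), ← map_sub,
    Ideal.Quotient.eq_zero_iff_mem]
  exact Ideal.subset_span (Set.mem_insert_of_mem _ rfl)

theorem ring_inverse_mk_sVar_mul_mk_tVar : Ring.inverse 𝐬 * 𝐭 = -1 := by
  have hu : IsUnit 𝐬 :=
    .of_mul_eq_one (-𝐭 ^ 3) (by rw [mk_sVar_eq_neg]; linear_combination mk_tVar_pow_four)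
  have h := Ring.inverse_mul_cancel _ hu
  rw [mk_sVar_eq_neg] at h ⊢
  linear_combination -h

noncomputable def evalZMod5 : LaurentTwo ⧸ alexanderIdeal →+* ZMod 5 :=
  alexanderEval (ZMod.unitOfCoprime 2 (by norm_num)) (by decide)

theorem evalZMod5_mk_tVar : evalZMod5 𝐭 = 2 :=
  alexanderEval_mk_tVar _ _

theorem mk_tVar_sq_ne_one : 𝐭 ^ 2 ≠ 1 := fun h => by
  have := congrArg evalZMod5 h
  rw [map_pow, map_one, evalZMod5_mk_tVar] at this
  exact absurd this (by decide)

theorem neg_one_ne_one : (-1 : LaurentTwo ⧸ alexanderIdeal) ≠ 1 := fun h => by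
  have := congrArg evalZMod5 h
  rw [map_neg, map_one] at this
  exact absurd this (by decide)

theorem orderOf_mk_tVar_mk_sVar : orderOf (𝐭, 𝐬) = 4 := by
  refine orderOf_eq_prime_pow (p := 2) (n := 1) (fun h => mk_tVar_sq_ne_one ?_) ?_
  · exact congrArg Prod.fst h
  · rw [mk_sVar_eq_neg]
    exact Prod.ext mk_tVar_pow_four ((Even.neg_pow (by decide) _).trans mk_tVar_pow_four)

theorem orderOf_ring_inverse_mk_sVar_mul_mk_tVar : orderOf (Ring.inverse 𝐬 * 𝐭) = 2 := by
  rw [ring_inverse_mk_sVar_mul_mk_tVar]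
  exact orderOf_eq_prime (by norm_num) neg_one_ne_one

/-- The Alexander biquandle `X = ℤ[s^{±1},t^{±1}]/(s + t, t⁴ − 1)` has type `4`
(the least `n > 0` with `tⁿa + (sⁿ−tⁿ)b = a` and `sⁿa = a` for all `a, b ∈ X`),
while its associated quandle `Q(X)`, with `x * y = s⁻¹t·x + (1 − s⁻¹t)·y`,
has type `2`. -/
theorem stmt_6 :
    IsLeast {n : ℕ | 0 < n ∧ ∀ a b : LaurentTwo ⧸ Ideal.span {sVar + tVar, tVar ^ 4 - 1},
        (Ideal.Quotient.mk _ tVar) ^ n * a +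
          ((Ideal.Quotient.mk _ sVar) ^ n - (Ideal.Quotient.mk _ tVar) ^ n) * b = a ∧
        (Ideal.Quotient.mk _ sVar) ^ n * a = a} 4 ∧
    IsLeast {n : ℕ | 0 < n ∧ ∀ x y : LaurentTwo ⧸ Ideal.span {sVar + tVar, tVar ^ 4 - 1},
        (Ring.inverse (Ideal.Quotient.mk _ sVar) * Ideal.Quotient.mk _ tVar) ^ n * x +
          (1 - (Ring.inverse (Ideal.Quotient.mk _ sVar) * Ideal.Quotient.mk _ tVar) ^ n) * y
          = x} 2 := by
  simp_rw [biquandle_identity_iff, quandle_identity_iff]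
  exact ⟨isLeast_of_orderOf_eq orderOf_mk_tVar_mk_sVar (by norm_num),
    isLeast_of_orderOf_eq orderOf_ring_inverse_mk_sVar_mul_mk_tVar (by norm_num)⟩
end

section
/- Let X = ⊔_{λ∈Λ} G_λ be a multiple conjugation biquandle. Then for any a, b in the same group G_λ, a ⟨under⟩* b ⟨over⟩*^{-1} b = b^{-1} a b, where ⟨over⟩*^{-1} b denotes the inverse of the bijection x ↦ x ⟨over⟩* b. -/
/-- Partial multiplication on a disjoint union of groups: the product of two
elements lying in the same group component. -/
def pmul {Λ : Type*} {G : Λ → Type*} [∀ l, Group (G l)]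
    (x y : Σ l, G l) (h : x.1 = y.1) : Σ l, G l :=
  ⟨x.1, x.2 * cast (congrArg G h.symm) y.2⟩

/-- A multiple conjugation biquandle (MCB): a disjoint union of groups `G l`
with operations `u` (⟨under⟩*) and `o` (⟨over⟩*). -/
structure MCB (Λ : Type*) (G : Λ → Type*) [∀ l, Group (G l)] where
  u : (Σ l, G l) → (Σ l, G l) → Σ l, G l
  o : (Σ l, G l) → (Σ l, G l) → Σ l, G l
  ex1 : ∀ x y z, u (u x y) (u z y) = u (u x z) (o y z)
  ex2 : ∀ x y z, o (u x y) (u z y) = u (o x z) (o y z)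
  ex3 : ∀ x y z, o (o x y) (o z y) = o (o x z) (u y z)
  uFib : ∀ (l : Λ) (a b : G l) (x : Σ l, G l), (u ⟨l, a⟩ x).1 = (u ⟨l, b⟩ x).1
  oFib : ∀ (l : Λ) (a b : G l) (x : Σ l, G l), (o ⟨l, a⟩ x).1 = (o ⟨l, b⟩ x).1
  uHom : ∀ (l : Λ) (a b : G l) (x : Σ l, G l),
    u ⟨l, a * b⟩ x = pmul (u ⟨l, a⟩ x) (u ⟨l, b⟩ x) (uFib l a b x)
  oHom : ∀ (l : Λ) (a b : G l) (x : Σ l, G l),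
    o ⟨l, a * b⟩ x = pmul (o ⟨l, a⟩ x) (o ⟨l, b⟩ x) (oFib l a b x)
  uProd : ∀ (x : Σ l, G l) (l : Λ) (a b : G l),
    u x ⟨l, a * b⟩ = u (u x ⟨l, a⟩) (o ⟨l, b⟩ ⟨l, a⟩)
  uOne : ∀ (x : Σ l, G l) (l : Λ), u x ⟨l, 1⟩ = x
  oProd : ∀ (x : Σ l, G l) (l : Λ) (a b : G l),
    o x ⟨l, a * b⟩ = o (o x ⟨l, a⟩) (o ⟨l, b⟩ ⟨l, a⟩)
  oOne : ∀ (x : Σ l, G l) (l : Λ), o x ⟨l, 1⟩ = x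
  conj : ∀ (l : Λ) (a b : G l), o ⟨l, a⁻¹ * b⟩ ⟨l, a⟩ = u ⟨l, b * a⁻¹⟩ ⟨l, a⟩

/-- In an MCB, for `a, b` in the same group `G l`,
`(a ⟨under⟩* b) ⟨over⟩*⁻¹ b = b⁻¹ a b`. -/
theorem stmt_7 {Λ : Type*} {G : Λ → Type*} [∀ l, Group (G l)] (M : MCB Λ G)
    (oi : (Σ l, G l) → (Σ l, G l) → Σ l, G l)
    (hoi₁ : ∀ x y, M.o (oi x y) y = x)
    (hoi₂ : ∀ x y, oi (M.o x y) y = x) :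
    ∀ (l : Λ) (a b : G l),
      oi (M.u ⟨l, a⟩ ⟨l, b⟩) ⟨l, b⟩ = ⟨l, b⁻¹ * a * b⟩ := by
  intro l a b
  have h := M.conj l b (a * b)
  rw [show a * b * b⁻¹ = a by group] at h
  rw [← h, hoi₂, mul_assoc]
end

section
/- Let X = ⊔_{λ∈Λ} G_λ be a multiple conjugation biquandle. Define x * y := (x ⟨under⟩* y) ⟨over⟩*^{-1} y. Then (X, *) with the given group structures on each G_λ is a multiple conjugation quandle: (i) a * b = b^{-1}ab for a, b ∈ G_λ; (ii) x * e_λ = x and x * (ab) = (x * a) * b for x ∈ X, a, b ∈ G_λ; (iii) (x*y)*z = (x*z)*(y*z) for all x,y,z; (iv) (ab)*x = (a*x)(b*x) for a,b ∈ G_λ, x ∈ X. -/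
/-- A multiple conjugation quandle (MCQ): a disjoint union of groups `G l`
with a binary operation `q` (*). -/
structure MCQ (Λ : Type*) (G : Λ → Type*) [∀ l, Group (G l)] where
  q : (Σ l, G l) → (Σ l, G l) → Σ l, G l
  conj : ∀ (l : Λ) (a b : G l), q ⟨l, a⟩ ⟨l, b⟩ = ⟨l, b⁻¹ * a * b⟩
  one : ∀ (x : Σ l, G l) (l : Λ), q x ⟨l, 1⟩ = x
  prod : ∀ (x : Σ l, G l) (l : Λ) (a b : G l),
    q x ⟨l, a * b⟩ = q (q x ⟨l, a⟩) ⟨l, b⟩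
  dist : ∀ x y z, q (q x y) z = q (q x z) (q y z)
  fib : ∀ (l : Λ) (a b : G l) (x : Σ l, G l), (q ⟨l, a⟩ x).1 = (q ⟨l, b⟩ x).1
  hom : ∀ (l : Λ) (a b : G l) (x : Σ l, G l),
    q ⟨l, a * b⟩ x = pmul (q ⟨l, a⟩ x) (q ⟨l, b⟩ x) (fib l a b x)

/-- For an MCB `X`, the operation `x * y := (x ⟨under⟩* y) ⟨over⟩*⁻¹ y` (with the
group structures on the components) makes `X` a multiple conjugation quandle. -/
theorem stmt_9 {Λ : Type*} {G : Λ → Type*} [∀ l, Group (G l)] (M : MCB Λ G)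
    (oi : (Σ l, G l) → (Σ l, G l) → Σ l, G l)
    (hoi₁ : ∀ x y, M.o (oi x y) y = x)
    (hoi₂ : ∀ x y, oi (M.o x y) y = x) :
    ∃ Q : MCQ Λ G, Q.q = fun x y => oi (M.u x y) y := by
  -- `o` is injective in its first variable
  have oinj : ∀ (p p' y : Σ l, G l), M.o p y = M.o p' y → p = p' := by
    intro p p' y h
    have := congrArg (fun w => oi w y) h
    simpa [hoi₂] using this
  have conjKey : ∀ (l : Λ) (a b : G l),
      M.o ⟨l, b⁻¹ * a * b⟩ ⟨l, b⟩ = M.u ⟨l, a⟩ ⟨l, b⟩ := by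
    intro l a b
    have h := M.conj l b (a * b)
    rw [mul_inv_cancel_right] at h
    rw [mul_assoc]
    exact h
  -- (i) conjugation
  have conjpf : ∀ (l : Λ) (a b : G l),
      oi (M.u ⟨l, a⟩ ⟨l, b⟩) ⟨l, b⟩ = ⟨l, b⁻¹ * a * b⟩ := by
    intro l a b
    rw [← conjKey l a b]
    exact hoi₂ _ _
  -- (ii) identity
  have onepf : ∀ (x : Σ l, G l) (l : Λ), oi (M.u x ⟨l, 1⟩) ⟨l, 1⟩ = x := by
    intro x l
    rw [M.uOne]
    calc oi x ⟨l, 1⟩ = oi (M.o x ⟨l, 1⟩) ⟨l, 1⟩ := by rw [M.oOne]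
      _ = x := hoi₂ _ _
  -- (ii) products
  have prodpf : ∀ (x : Σ l, G l) (l : Λ) (a b : G l),
      oi (M.u x ⟨l, a * b⟩) ⟨l, a * b⟩
        = oi (M.u (oi (M.u x ⟨l, a⟩) ⟨l, a⟩) ⟨l, b⟩) ⟨l, b⟩ := by
    intro x l a b
    set y := oi (M.u x ⟨l, a⟩) ⟨l, a⟩ with hy
    set z := oi (M.u y ⟨l, b⟩) ⟨l, b⟩ with hz
    have h1 : M.o y ⟨l, a⟩ = M.u x ⟨l, a⟩ := hoi₁ _ _
    have h2 : M.o z ⟨l, b⟩ = M.u y ⟨l, b⟩ := hoi₁ _ _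
    have e : M.o z ⟨l, a * b⟩ = M.u x ⟨l, a * b⟩ := by
      have hab : a * b = b * (b⁻¹ * a * b) := by group
      calc M.o z ⟨l, a * b⟩ = M.o z ⟨l, b * (b⁻¹ * a * b)⟩ := by rw [← hab]
        _ = M.o (M.o z ⟨l, b⟩) (M.o ⟨l, b⁻¹ * a * b⟩ ⟨l, b⟩) := M.oProd z l b _
        _ = M.o (M.u y ⟨l, b⟩) (M.u ⟨l, a⟩ ⟨l, b⟩) := by rw [h2, conjKey]
        _ = M.u (M.o y ⟨l, a⟩) (M.o ⟨l, b⟩ ⟨l, a⟩) := M.ex2 y ⟨l, b⟩ ⟨l, a⟩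
        _ = M.u (M.u x ⟨l, a⟩) (M.o ⟨l, b⟩ ⟨l, a⟩) := by rw [h1]
        _ = M.u x ⟨l, a * b⟩ := (M.uProd x l a b).symm
    rw [← e, hoi₂]
  -- (iii) distributivity
  have distpf : ∀ x y z,
      oi (M.u (oi (M.u x y) y) z) z
        = oi (M.u (oi (M.u x z) z) (oi (M.u y z) z)) (oi (M.u y z) z) := by
    intro x y z
    set A := oi (M.u x y) y with hA0
    set r := oi (M.u x z) z with hr0
    set s := oi (M.u y z) z with hs0
    set B := oi (M.u A z) z with hB0
    set C := oi (M.u r s) s with hC0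
    have hA : M.o A y = M.u x y := hoi₁ _ _
    have hr : M.o r z = M.u x z := hoi₁ _ _
    have hs : M.o s z = M.u y z := hoi₁ _ _
    have hB : M.o B z = M.u A z := hoi₁ _ _
    have hC : M.o C s = M.u r s := hoi₁ _ _
    have e1 : M.o (M.o C s) (M.u z s) = M.u (M.u x y) (M.o z y) := by
      rw [hC, M.ex2 r s z, hr, hs]
      exact M.ex1 x z y
    have e2 : M.o (M.o B s) (M.u z s) = M.u (M.u x y) (M.o z y) := by
      rw [← M.ex3 B z s, hB, hs, M.ex2 A z y, hA]
    exact (oinj _ _ _ (oinj _ _ _ (e1.trans e2.symm))).symm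
  -- `o ⟨l,1⟩ x` is the identity of its component
  have oneImg : ∀ (l : Λ) (x : Σ l, G l),
      M.o ⟨l, (1 : G l)⟩ x = ⟨(M.o ⟨l, (1 : G l)⟩ x).1, 1⟩ := by
    intro l x
    have h := M.oHom l 1 1 x
    rw [one_mul] at h
    have h' : M.o ⟨l, (1 : G l)⟩ x
        = ⟨(M.o ⟨l, (1 : G l)⟩ x).1,
            (M.o ⟨l, (1 : G l)⟩ x).2 * (M.o ⟨l, (1 : G l)⟩ x).2⟩ := h
    have hc : (M.o ⟨l, (1 : G l)⟩ x).2
        = (M.o ⟨l, (1 : G l)⟩ x).2 * (M.o ⟨l, (1 : G l)⟩ x).2 :=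
      eq_of_heq (Sigma.ext_iff.mp h').2
    have hc1 : (M.o ⟨l, (1 : G l)⟩ x).2 = 1 := left_eq_mul.mp hc
    calc M.o ⟨l, (1 : G l)⟩ x
        = ⟨(M.o ⟨l, (1 : G l)⟩ x).1, (M.o ⟨l, (1 : G l)⟩ x).2⟩ := rfl
      _ = ⟨(M.o ⟨l, (1 : G l)⟩ x).1, 1⟩ := by rw [hc1]
  -- the component of `o p x` determines the component of `p`
  have oFst : ∀ (p p' x : Σ l, G l), (M.o p x).1 = (M.o p' x).1 → p.1 = p'.1 := by
    rintro ⟨l1, c⟩ ⟨l2, d⟩ x h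
    have f1 : (M.o ⟨l1, (1 : G l1)⟩ x).1 = (M.o ⟨l2, (1 : G l2)⟩ x).1 := by
      rw [M.oFib l1 1 c x, M.oFib l2 1 d x]
      exact h
    have h1 : M.o ⟨l1, (1 : G l1)⟩ x = M.o ⟨l2, (1 : G l2)⟩ x := by
      rw [oneImg l1 x, oneImg l2 x]
      exact congrArg (fun t => (⟨t, 1⟩ : Σ l, G l)) f1
    show l1 = l2
    exact congrArg Sigma.fst (oinj ⟨l1, 1⟩ ⟨l2, 1⟩ x h1)
  -- fibration property of the new operation
  have fibpf : ∀ (l : Λ) (a b : G l) (x : Σ l, G l),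
      (oi (M.u ⟨l, a⟩ x) x).1 = (oi (M.u ⟨l, b⟩ x) x).1 := by
    intro l a b x
    apply oFst _ _ x
    rw [hoi₁, hoi₁]
    exact M.uFib l a b x
  -- `o` is a homomorphism in its first variable, in general `pmul` form
  have oHomGen : ∀ (x p p' : Σ l, G l) (h : p.1 = p'.1)
      (h2 : (M.o p x).1 = (M.o p' x).1),
      M.o (pmul p p' h) x = pmul (M.o p x) (M.o p' x) h2 := by
    rintro x ⟨l1, c⟩ ⟨l2, d⟩ h h2
    obtain rfl : l1 = l2 := h
    exact M.oHom l1 c d x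
  have pmulCongr : ∀ (p p' w w' : Σ l, G l) (h : p.1 = p'.1) (h' : w.1 = w'.1),
      p = w → p' = w' → pmul p p' h = pmul w w' h' := by
    rintro p p' w w' h h' rfl rfl
    rfl
  -- (iv) group homomorphism property
  have hompf : ∀ (l : Λ) (a b : G l) (x : Σ l, G l),
      oi (M.u ⟨l, a * b⟩ x) x
        = pmul (oi (M.u ⟨l, a⟩ x) x) (oi (M.u ⟨l, b⟩ x) x) (fibpf l a b x) := by
    intro l a b x
    apply oinj _ _ x
    have h2 : (M.o (oi (M.u ⟨l, a⟩ x) x) x).1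
        = (M.o (oi (M.u ⟨l, b⟩ x) x) x).1 := by
      rw [hoi₁, hoi₁]
      exact M.uFib l a b x
    rw [hoi₁, M.uHom, oHomGen x _ _ (fibpf l a b x) h2]
    exact pmulCongr _ _ _ _ _ _ (hoi₁ _ _).symm (hoi₁ _ _).symm
  exact ⟨⟨fun x y => oi (M.u x y) y, conjpf, onepf, prodpf, distpf, fibpf, hompf⟩, rfl⟩
end

section
/- Let (X, {⟨under⟩*^g}_{g∈G}, {⟨over⟩*^g}_{g∈G}) be a G-family of biquandles. Define x *^g y := (x ⟨under⟩*^g y) ⟨over⟩*^{g^{-1}} (y ⟨over⟩*^g y). Then (X, {*^g}_{g∈G}) is a G-family of quandles: x *^g x = x; x *^{gh} y = (x *^g y) *^h y and x *^e y = x; and (x *^g y) *^h z = (x *^h z) *^{h^{-1}gh} (y *^h z). -/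
/-- A `G`-family of biquandles: a nonempty set `X` with families of operations
`u g` (⟨under⟩*^g) and `o g` (⟨over⟩*^g) indexed by a group `G`. -/
structure GFamilyBiquandle (G : Type*) [Group G] (X : Type*) where
  nonempty : Nonempty X
  u : G → X → X → X
  o : G → X → X → X
  diag : ∀ (g : G) (x : X), u g x x = o g x x
  uComp : ∀ (g h : G) (x y : X), u (g * h) x y = u h (u g x y) (u g y y)
  uOne : ∀ x y : X, u 1 x y = x
  oComp : ∀ (g h : G) (x y : X), o (g * h) x y = o h (o g x y) (o g y y)
  oOne : ∀ x y : X, o 1 x y = x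
  ex1 : ∀ (g h : G) (x y z : X),
    u h (u g x y) (o g z y) = u (h⁻¹ * g * h) (u h x z) (u h y z)
  ex2 : ∀ (g h : G) (x y z : X),
    u h (o g x y) (o g z y) = o (h⁻¹ * g * h) (u h x z) (u h y z)
  ex3 : ∀ (g h : G) (x y z : X),
    o h (o g x y) (o g z y) = o (h⁻¹ * g * h) (o h x z) (u h y z)

/-- A `G`-family of quandles: a nonempty set `X` with a family of operations
`q g` (*^g) indexed by a group `G`. -/
structure GFamilyQuandle (G : Type*) [Group G] (X : Type*) where
  nonempty : Nonempty X
  q : G → X → X → X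
  idem : ∀ (g : G) (x : X), q g x x = x
  comp : ∀ (g h : G) (x y : X), q (g * h) x y = q h (q g x y) y
  one : ∀ x y : X, q 1 x y = x
  dist : ∀ (g h : G) (x y z : X),
    q h (q g x y) z = q (h⁻¹ * g * h) (q h x z) (q h y z)

namespace GFamilyBiquandle

variable {G X : Type*} [Group G] (F : GFamilyBiquandle G X)

lemma oCancel (g : G) (x y : X) : F.o g⁻¹ (F.o g x y) (F.o g y y) = x := by
  have h := F.oComp g g⁻¹ x y
  rw [mul_inv_cancel, F.oOne] at h
  exact h.symm

lemma uCancel (g : G) (x y : X) : F.u g⁻¹ (F.u g x y) (F.o g y y) = x := by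
  have h := F.uComp g g⁻¹ x y
  rw [mul_inv_cancel, F.uOne, F.diag] at h
  exact h.symm

end GFamilyBiquandle

/-- For a `G`-family of biquandles, the operation
`x *^g y := (x ⟨under⟩*^g y) ⟨over⟩*^{g⁻¹} (y ⟨over⟩*^g y)` makes `X` a
`G`-family of quandles. -/
theorem stmt_12 {G X : Type*} [Group G] (F : GFamilyBiquandle G X) :
    ∃ Q : GFamilyQuandle G X,
      Q.q = fun g x y => F.o g⁻¹ (F.u g x y) (F.o g y y) := by
  refine ⟨⟨F.nonempty, fun g x y => F.o g⁻¹ (F.u g x y) (F.o g y y), ?_, ?_, ?_, ?_⟩, rfl⟩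
  · -- idem
    intro g x
    show F.o g⁻¹ (F.u g x x) (F.o g x x) = x
    rw [F.diag]
    exact F.oCancel g x x
  · -- comp
    intro g h x y
    show F.o (g*h)⁻¹ (F.u (g*h) x y) (F.o (g*h) y y) =
      F.o h⁻¹ (F.u h (F.o g⁻¹ (F.u g x y) (F.o g y y)) y) (F.o h y y)
    have e5 : F.u h (F.o g⁻¹ (F.u g x y) (F.o g y y)) y =
        F.o (h⁻¹*g⁻¹*h) (F.u h (F.u g x y) (F.o g y y)) (F.o (g*h) y y) := by
      calc F.u h (F.o g⁻¹ (F.u g x y) (F.o g y y)) y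
          = F.u h (F.o g⁻¹ (F.u g x y) (F.o g y y))
              (F.o g⁻¹ (F.o g y y) (F.o g y y)) := by rw [F.oCancel g y y]
        _ = F.o (h⁻¹*g⁻¹*h) (F.u h (F.u g x y) (F.o g y y))
              (F.u h (F.o g y y) (F.o g y y)) := F.ex2 g⁻¹ h _ _ _
        _ = F.o (h⁻¹*g⁻¹*h) (F.u h (F.u g x y) (F.o g y y)) (F.o (g*h) y y) := by
              rw [F.diag, ← F.oComp]
    rw [e5]
    have e4 : F.o (h⁻¹*g⁻¹*h) (F.o (g*h) y y) (F.o (g*h) y y) = F.o h y y := by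
      rw [← F.oComp]; congr 1; group
    rw [← e4, ← F.oComp]
    have e1 : F.u (g*h) x y = F.u h (F.u g x y) (F.o g y y) := by
      rw [F.uComp, F.diag]
    rw [e1]
    congr 1
    group
  · -- one
    intro x y
    show F.o 1⁻¹ (F.u 1 x y) (F.o 1 y y) = x
    rw [inv_one, F.uOne, F.oOne]
  · -- dist
    intro g h x y z
    show F.o h⁻¹ (F.u h (F.o g⁻¹ (F.u g x y) (F.o g y y)) z) (F.o h z z) =
      F.o (h⁻¹*g*h)⁻¹
        (F.u (h⁻¹*g*h) (F.o h⁻¹ (F.u h x z) (F.o h z z))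
          (F.o h⁻¹ (F.u h y z) (F.o h z z)))
        (F.o (h⁻¹*g*h) (F.o h⁻¹ (F.u h y z) (F.o h z z))
          (F.o h⁻¹ (F.u h y z) (F.o h z z)))
    set k : G := h⁻¹*g*h with hk
    set P : X := F.u h x z with hP
    set Y : X := F.u h y z with hY
    set D : X := F.o h z z with hD
    -- LHS
    have L1 : F.u h (F.o g⁻¹ (F.u g x y) (F.o g y y)) z =
        F.o (h⁻¹*g⁻¹*h) (F.u h (F.u g x y) (F.o g z y))
          (F.u h (F.o g y y) (F.o g z y)) := by
      calc F.u h (F.o g⁻¹ (F.u g x y) (F.o g y y)) z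
          = F.u h (F.o g⁻¹ (F.u g x y) (F.o g y y))
              (F.o g⁻¹ (F.o g z y) (F.o g y y)) := by rw [F.oCancel g z y]
        _ = _ := F.ex2 g⁻¹ h _ _ _
    have L2 : F.u h (F.u g x y) (F.o g z y) = F.u k P Y := F.ex1 g h x y z
    have L3 : F.u h (F.o g y y) (F.o g z y) = F.o k Y Y := by
      rw [← F.diag g y, F.ex1 g h y y z, ← hk, ← hY, F.diag]
    have L4 : (k⁻¹ : G) = h⁻¹*g⁻¹*h := by rw [hk]; group
    have LHS : F.u h (F.o g⁻¹ (F.u g x y) (F.o g y y)) z =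
        F.o k⁻¹ (F.u k P Y) (F.o k Y Y) := by
      rw [L1, L2, L3, L4]
    rw [LHS]
    -- RHS
    rw [F.ex2 h⁻¹ k P D Y, F.ex3 h⁻¹ k Y D Y]
    rw [F.ex3 (k⁻¹*h⁻¹*k) k⁻¹ (F.u k P Y) (F.u k D Y) (F.o k Y Y)]
    rw [F.uCancel k D Y]
    congr 1
    rw [hk]; group
end

section
/- Let R be a ring, G a group, and X a right R[G]-module. Define x *^g y := x·g + y·(e − g). Then (X, {*^g}_{g∈G}) is a G-family of quandles. -/
open MulOpposite

section Aux
variable {R G X : Type*} [Ring R] [Group G] [AddCommGroup X]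
    [Module (MonoidAlgebra R G)ᵐᵒᵖ X]

lemma aux_add_stmt13 (a b : MonoidAlgebra R G) (x : X) :
    op a • x + op b • x = op (a + b) • x := by
  rw [op_add, add_smul]

lemma aux_mul_stmt13 (a b : MonoidAlgebra R G) (x : X) :
    op a • (op b • x) = op (b * a) • x := by
  rw [op_mul, mul_smul]

end Aux

open MulOpposite in
/-- For a ring `R`, a group `G` and a right `R[G]`-module `X` (a module over the
opposite of the group ring), the operations `x *^g y := x·g + y·(e − g)` make `X`
a `G`-family of quandles (the `G`-family of Alexander quandles). -/
theorem stmt_13 (R G X : Type*) [Ring R] [Group G] [AddCommGroup X]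
    [Module (MonoidAlgebra R G)ᵐᵒᵖ X] :
    ∃ Q : GFamilyQuandle G X,
      Q.q = fun (g : G) (x y : X) =>
        op (MonoidAlgebra.of R G g) • x + op (1 - MonoidAlgebra.of R G g) • y := by
  refine ⟨⟨⟨0⟩,
    fun g x y => op (MonoidAlgebra.of R G g) • x + op (1 - MonoidAlgebra.of R G g) • y,
    ?_, ?_, ?_, ?_⟩, rfl⟩
  · intro g x
    beta_reduce
    rw [aux_add_stmt13]; simp
  · intro g h x y
    beta_reduce
    rw [smul_add, aux_mul_stmt13, aux_mul_stmt13, add_assoc, aux_add_stmt13]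
    congr 1
    · congr 1; simp [map_mul]
    · congr 1; simp only [map_mul]; noncomm_ring
  · intro x y
    beta_reduce
    simp [map_one]
  · intro g h x y z
    beta_reduce
    have hk : MonoidAlgebra.of R G h * MonoidAlgebra.of R G (h⁻¹ * g * h)
        = MonoidAlgebra.of R G g * MonoidAlgebra.of R G h := by
      rw [← map_mul, ← map_mul]; congr 1; group
    simp only [smul_add, aux_mul_stmt13]
    rw [add_add_add_comm, aux_add_stmt13]
    congr 2
    · rw [hk]
    · congr 1; simp only [mul_sub, sub_mul, mul_one, one_mul, hk]
    · congr 1; simp only [mul_sub, sub_mul, mul_one, one_mul, hk]; abel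
end

section
/- Let R be a ring, G a group, f : G → Z(G) a group homomorphism into the center of G, and X a right R[G]-module. Define x ⟨under⟩*^g y := x·g + y·(f(g) − g) and x ⟨over⟩*^g y := x·f(g). Then (X, {⟨under⟩*^g}, {⟨over⟩*^g}) is a G-family of biquandles. -/
/-!
Write `x ⟨under⟩*^g y = (x - y)·g + y·f(g)`. All axioms then become identities between
coefficients in `R[G]`, and the only facts they use are `h·(h⁻¹gh) = g·h` and that `f(g)` is
central, so it commutes with every `h` and `f(h⁻¹gh) = f(g)`. The argument works for any
ring `A` and homomorphism `G →* A` in place of `G →* R[G]`.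
-/

open scoped RightActions

namespace MonoidHom

variable {G H M : Type*} [Group G] [Group H] [Monoid M]

lemma map_conj_of_mem_center (f : G →* H) {g : G} (hg : f g ∈ Subgroup.center H) (h : G) :
    f (h⁻¹ * g * h) = f g := by
  rw [map_mul, map_mul, map_inv, mul_assoc, ← Subgroup.mem_center_iff.mp hg,
    inv_mul_cancel_left]

lemma commute_map_of_mem_center (α : G →* M) {z : G} (hz : z ∈ Subgroup.center G) (g : G) :
    Commute (α z) (α g) :=
  Commute.map (Subgroup.mem_center_iff.mp hz g).symm α

lemma map_mul_map_conj (α : G →* M) (g h : G) : α h * α (h⁻¹ * g * h) = α g * α h := by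
  rw [← map_mul, ← map_mul]; group

end MonoidHom

namespace GFamilyBiquandle

variable {G A X : Type*} [Group G] [Ring A] [AddCommGroup X] [Module Aᵐᵒᵖ X]

def alexander (α : G →* A) (f : G →* G) (hf : ∀ g, f g ∈ Subgroup.center G) :
    GFamilyBiquandle G X where
  nonempty := ⟨0⟩
  u g x y := (x - y) <• α g + y <• α (f g)
  o g x _ := x <• α (f g)
  diag g x := by rw [sub_self, smul_zero, zero_add]
  uComp g h x y := by
    simp only [map_mul, op_smul_mul, sub_self, smul_zero, zero_add, add_sub_cancel_right]
  uOne x y := by simp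
  oComp g h x y := by rw [map_mul, map_mul, op_smul_mul]
  oOne x y := by simp
  ex1 g h x y z := by
    simp only [f.map_conj_of_mem_center (hf g), smul_add, smul_sub, op_smul_op_smul,
      α.map_mul_map_conj, ← (α.commute_map_of_mem_center (hf g) h).eq,
      ← (α.commute_map_of_mem_center (hf g) (f h)).eq]
    abel
  ex2 g h x y z := by
    simp only [f.map_conj_of_mem_center (hf g), smul_add, smul_sub, op_smul_op_smul,
      ← (α.commute_map_of_mem_center (hf g) h).eq,
      ← (α.commute_map_of_mem_center (hf g) (f h)).eq]
  ex3 g h x y z := by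
    simp only [f.map_conj_of_mem_center (hf g), op_smul_op_smul,
      ← (α.commute_map_of_mem_center (hf g) (f h)).eq]

lemma alexander_u (α : G →* A) (f : G →* G) (hf : ∀ g, f g ∈ Subgroup.center G) :
    (alexander α f hf : GFamilyBiquandle G X).u =
      fun g x y => x <• α g + y <• (α (f g) - α g) := by
  funext g x y
  show (x - y) <• α g + y <• α (f g) = _
  rw [MulOpposite.op_sub, sub_smul, smul_sub]
  abel

end GFamilyBiquandle

open MulOpposite in
/-- For a ring `R`, a group `G`, a homomorphism `f : G → Z(G)` into the center,
and a right `R[G]`-module `X`, the operations `x ⟨under⟩*^g y := x·g + y·(f(g) − g)`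
and `x ⟨over⟩*^g y := x·f(g)` make `X` a `G`-family of biquandles
(the `G`-family of Alexander biquandles). -/
theorem stmt_14 (R G X : Type*) [Ring R] [Group G] [AddCommGroup X]
    [Module (MonoidAlgebra R G)ᵐᵒᵖ X]
    (f : G →* G) (hf : ∀ g, f g ∈ Subgroup.center G) :
    ∃ F : GFamilyBiquandle G X,
      (F.u = fun (g : G) (x y : X) =>
        op (MonoidAlgebra.of R G g) • x +
          op (MonoidAlgebra.of R G (f g) - MonoidAlgebra.of R G g) • y) ∧
      (F.o = fun (g : G) (x y : X) => op (MonoidAlgebra.of R G (f g)) • x) :=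
  ⟨.alexander (MonoidAlgebra.of R G) f hf, GFamilyBiquandle.alexander_u _ f hf, rfl⟩
end

section
/- Let (X, {*^g}_{g∈G}) be a G-family of quandles. Then X × G = ⊔_{x∈X} {x} × G with (x,g) * (y,h) := (x *^h y, h^{-1}gh) and partial multiplication (x,g)(x,h) := (x, gh) is a multiple conjugation quandle. -/
/-- For a `G`-family of quandles `X`, the disjoint union `X × G = ⊔_{x∈X} {x} × G`
with `(x,g) * (y,h) := (x *^h y, h⁻¹gh)` and `(x,g)(x,h) := (x, gh)` is a
multiple conjugation quandle (the associated MCQ). -/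
theorem stmt_16 {G X : Type*} [Group G] (F : GFamilyQuandle G X) :
    ∃ M : MCQ X (fun _ => G),
      M.q = fun p r => ⟨F.q r.2 p.1 r.1, r.2⁻¹ * p.2 * r.2⟩ := by
  refine ⟨{ q := fun p r => ⟨F.q r.2 p.1 r.1, r.2⁻¹ * p.2 * r.2⟩
            conj := ?_, one := ?_, prod := ?_, dist := ?_, fib := ?_, hom := ?_ }, rfl⟩
  · intro l a b
    simp [F.idem]
  · intro x l
    simp [F.one]
  · intro x l a b
    simp only [F.comp]
    congr 1
    group
  · intro x y z
    refine Sigma.ext ?_ (heq_of_eq ?_)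
    · exact F.dist y.2 z.2 x.1 y.1 z.1
    · group
  · intro l a b x
    rfl
  · intro l a b x
    simp only [pmul]
    refine Sigma.ext rfl (heq_of_eq ?_)
    rw [eq_of_heq (cast_heq _ _)]
    group
end

section
/- Let (X, {⟨under⟩*^g}_{g∈G}, {⟨over⟩*^g}_{g∈G}) be a G-family of biquandles. Then X × G = ⊔_{x∈X} {x} × G with (x,g) ⟨under⟩* (y,h) := (x ⟨under⟩*^h y, h^{-1}gh), (x,g) ⟨over⟩* (y,h) := (x ⟨over⟩*^h y, g), and partial multiplication (x,g)(x,h) := (x, gh) is a multiple conjugation biquandle. -/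
/-- For a `G`-family of biquandles `X`, the disjoint union `X × G = ⊔_{x∈X} {x} × G`
with `(x,g) ⟨under⟩* (y,h) := (x ⟨under⟩*^h y, h⁻¹gh)`,
`(x,g) ⟨over⟩* (y,h) := (x ⟨over⟩*^h y, g)` and `(x,g)(x,h) := (x, gh)` is a
multiple conjugation biquandle (the associated MCB). -/
theorem stmt_17 {G X : Type*} [Group G] (F : GFamilyBiquandle G X) :
    ∃ M : MCB X (fun _ => G),
      (M.u = fun p r => ⟨F.u r.2 p.1 r.1, r.2⁻¹ * p.2 * r.2⟩) ∧
      (M.o = fun p r => ⟨F.o r.2 p.1 r.1, p.2⟩) := by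
  refine ⟨{
    u := fun p r => ⟨F.u r.2 p.1 r.1, r.2⁻¹ * p.2 * r.2⟩
    o := fun p r => ⟨F.o r.2 p.1 r.1, p.2⟩
    ex1 := ?_, ex2 := ?_, ex3 := ?_, uFib := ?_, oFib := ?_, uHom := ?_
    oHom := ?_, uProd := ?_, uOne := ?_, oProd := ?_, oOne := ?_, conj := ?_ },
    rfl, rfl⟩
  · rintro ⟨x, g⟩ ⟨y, h⟩ ⟨z, k⟩
    exact Sigma.ext (F.ex1 k h x z y).symm (heq_of_eq (by group))
  · rintro ⟨x, g⟩ ⟨y, h⟩ ⟨z, k⟩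
    exact Sigma.ext (F.ex2 k h x z y).symm (heq_of_eq (by group))
  · rintro ⟨x, g⟩ ⟨y, h⟩ ⟨z, k⟩
    exact Sigma.ext (F.ex3 h k x y z) (heq_of_eq rfl)
  · intro l a b x; rfl
  · intro l a b x; rfl
  · intro l a b x
    exact Sigma.ext rfl (heq_of_eq (show x.2⁻¹ * (a * b) * x.2 =
      (x.2⁻¹ * a * x.2) * (x.2⁻¹ * b * x.2) by group))
  · intro l a b x; rfl
  · rintro ⟨x, g⟩ l a b
    exact Sigma.ext (by dsimp only; rw [F.uComp, F.diag]) (heq_of_eq (by group))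
  · rintro ⟨x, g⟩ l
    exact Sigma.ext (F.uOne x l) (heq_of_eq (by group))
  · rintro ⟨x, g⟩ l a b
    exact Sigma.ext (by dsimp only; rw [F.oComp]) (heq_of_eq rfl)
  · rintro ⟨x, g⟩ l
    exact Sigma.ext (F.oOne x l) (heq_of_eq rfl)
  · intro l a b
    exact Sigma.ext (F.diag a l).symm (heq_of_eq (by group))
end

section
/- Let (X, {⟨under⟩*^g}, {⟨over⟩*^g}) be a G-family of biquandles, X × G its associated MCB, and Q_G(X) the G-family of quandles with x *^g y = (x ⟨under⟩*^g y) ⟨over⟩*^{g^{-1}} (y ⟨over⟩*^g y). Then the MCQ Q(X × G), with operation (x,g) * (y,h) = ((x,g) ⟨under⟩* (y,h)) ⟨over⟩*^{-1} (y,h), equals the associated MCQ of Q_G(X); i.e., (x,g) * (y,h) = ((x ⟨under⟩*^h y) ⟨over⟩*^{h^{-1}} (y ⟨over⟩*^h y), h^{-1}gh). -/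
/-- For a `G`-family of biquandles `X` with associated MCB `X × G`, the MCQ
operation `(x,g) * (y,h) = ((x,g) ⟨under⟩* (y,h)) ⟨over⟩*⁻¹ (y,h)` on `X × G`
coincides with the associated MCQ of the derived `G`-family of quandles
`Q_G(X)`: `(x,g) * (y,h) = ((x ⟨under⟩*^h y) ⟨over⟩*^{h⁻¹} (y ⟨over⟩*^h y), h⁻¹gh)`. -/
theorem stmt_18 {G X : Type*} [Group G] (F : GFamilyBiquandle G X)
    (M : MCB X (fun _ => G))
    (hMu : M.u = fun p r => ⟨F.u r.2 p.1 r.1, r.2⁻¹ * p.2 * r.2⟩)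
    (hMo : M.o = fun p r => ⟨F.o r.2 p.1 r.1, p.2⟩)
    (oi : (Σ _ : X, G) → (Σ _ : X, G) → Σ _ : X, G)
    (hoi₁ : ∀ x y, M.o (oi x y) y = x)
    (hoi₂ : ∀ x y, oi (M.o x y) y = x) :
    ∀ p r : Σ _ : X, G,
      oi (M.u p r) r =
        ⟨F.o r.2⁻¹ (F.u r.2 p.1 r.1) (F.o r.2 r.1 r.1), r.2⁻¹ * p.2 * r.2⟩ := by
  intro p r
  have h1 : F.o r.2⁻¹ (F.o r.2 r.1 r.1) (F.o r.2 r.1 r.1) = r.1 := by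
    have := F.oComp r.2 r.2⁻¹ r.1 r.1
    simpa [F.oOne] using this.symm
  have key : M.o ⟨F.o r.2⁻¹ (F.u r.2 p.1 r.1) (F.o r.2 r.1 r.1), r.2⁻¹ * p.2 * r.2⟩ r
      = M.u p r := by
    rw [hMo, hMu]
    dsimp only
    congr 1
    have := F.oComp r.2⁻¹ r.2 (F.u r.2 p.1 r.1) (F.o r.2 r.1 r.1)
    rw [h1] at this
    simpa [F.oOne] using this.symm
  rw [← key, hoi₂]
end

section
/- Let (X, ⟨under⟩*, ⟨over⟩*) be a biquandle of finite type m, and k a positive integer. Then X with the families {⟨under⟩*^{[i]}}_{i ∈ ℤ_{km}} and {⟨over⟩*^{[i]}}_{i ∈ ℤ_{km}} is a ℤ_{km}-family of biquandles. -/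
/-!
The exchange laws for the iterated operations follow from those of the biquandle by induction
on the number of iterations: first with one side a single operation, then in general. The
diagonal identity `U i x x = O i x x` is what lets the `ex1` and `ex3` inductions go through.
Finite type `m` makes the iterates `m`-periodic, hence `km`-periodic, in the index, so they are
well defined on `ℤ_{km}`, and the composition law descends from the one on `ℤ`.
-/

theorem Function.Periodic.eq_of_intCast_eq {α : Type*} {F : ℤ → α} {n : ℕ}
    (hF : Function.Periodic F n) {i j : ℤ} (hij : (i : ZMod n) = j) : F i = F j := by
  obtain ⟨t, ht⟩ := (ZMod.intCast_eq_intCast_iff_dvd_sub i j n).mp hij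
  have hshift := hF.int_mul t i
  rw [Int.cast_id] at hshift
  rw [show j = i + t * n by linarith, hshift]

section Iterate

variable {X : Type*}

structure IsIteratedOp (f : X → X → X) (F : ℤ → X → X → X) : Prop where
  zero : ∀ a b, F 0 a b = a
  one : ∀ a b, F 1 a b = f a b
  add : ∀ i j a b, F (i + j) a b = F j (F i a b) (F i b b)

namespace IsIteratedOp

variable {f : X → X → X} {F : ℤ → X → X → X}

theorem natCast_succ (hF : IsIteratedOp f F) (n : ℕ) (a b : X) :
    F (n + 1 : ℕ) a b = f (F n a b) (F n b b) := by
  rw [Nat.cast_succ, hF.add, hF.one]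

theorem periodic (hF : IsIteratedOp f F) {m : ℤ} (hm : ∀ a b, F m a b = a) :
    Function.Periodic F m := by
  intro n
  funext a b
  rw [hF.add, hm]

theorem val_add (hF : IsIteratedOp f F) {n : ℕ} [NeZero n] (hper : Function.Periodic F n)
    (g h : ZMod n) (x y : X) :
    F (g + h).val x y = F h.val (F g.val x y) (F g.val y y) := by
  rw [← hF.add]
  exact congrFun₂ (hper.eq_of_intCast_eq (by push_cast [ZMod.natCast_zmod_val]; rfl)) x y

end IsIteratedOp

end Iterate

namespace Biquandle

variable {X : Type*} {B : Biquandle X} {U O : ℤ → X → X → X}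

theorem iter_diag (hU : IsIteratedOp B.u U) (hO : IsIteratedOp B.o O) (i : ℕ) (x : X) :
    U i x x = O i x x := by
  induction i with
  | zero => simp only [Nat.cast_zero, hU.zero, hO.zero]
  | succ i ih => rw [hU.natCast_succ, hO.natCast_succ, ih, B.diag]

theorem u_iter_ex1 (hU : IsIteratedOp B.u U) (hO : IsIteratedOp B.o O) (i : ℕ) (x y z : X) :
    B.u (U i x y) (O i z y) = U i (B.u x z) (B.u y z) := by
  induction i generalizing x y with
  | zero => simp only [Nat.cast_zero, hU.zero, hO.zero]
  | succ i ih =>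
    rw [hU.natCast_succ, hO.natCast_succ, ← iter_diag hU hO i y, ← B.ex1, ih, ih,
      hU.natCast_succ]

theorem u_iter_ex2 (hO : IsIteratedOp B.o O) (i : ℕ) (x y z : X) :
    B.u (O i x y) (O i z y) = O i (B.u x z) (B.u y z) := by
  induction i generalizing x y with
  | zero => simp only [Nat.cast_zero, hO.zero]
  | succ i ih => rw [hO.natCast_succ, hO.natCast_succ, ← B.ex2, ih, ih, hO.natCast_succ]

theorem o_iter_ex3 (hO : IsIteratedOp B.o O) (i : ℕ) (x y z : X) :
    B.o (O i x y) (O i z y) = O i (B.o x z) (B.u y z) := by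
  induction i generalizing x y with
  | zero => simp only [Nat.cast_zero, hO.zero]
  | succ i ih =>
    rw [hO.natCast_succ, hO.natCast_succ, B.ex3, ih, u_iter_ex2 hO, hO.natCast_succ]

theorem iter_ex2 (hU : IsIteratedOp B.u U) (hO : IsIteratedOp B.o O) (j i : ℕ) (x y z : X) :
    U j (O i x y) (O i z y) = O i (U j x z) (U j y z) := by
  induction j generalizing x with
  | zero => simp only [Nat.cast_zero, hU.zero]
  | succ j ih =>
    rw [hU.natCast_succ, ih, ih, u_iter_ex2 hO, ← hU.natCast_succ, ← hU.natCast_succ]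

theorem iter_ex1 (hU : IsIteratedOp B.u U) (hO : IsIteratedOp B.o O) (j i : ℕ) (x y z : X) :
    U j (U i x y) (O i z y) = U i (U j x z) (U j y z) := by
  induction j with
  | zero => simp only [Nat.cast_zero, hU.zero]
  | succ j ih =>
    rw [hU.natCast_succ, ih, iter_ex2 hU hO, u_iter_ex1 hU hO, ← hU.natCast_succ,
      ← hU.natCast_succ]

theorem iter_ex3 (hU : IsIteratedOp B.u U) (hO : IsIteratedOp B.o O) (j i : ℕ) (x y z : X) :
    O j (O i x y) (O i z y) = O i (O j x z) (U j y z) := by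
  induction j generalizing x with
  | zero => simp only [Nat.cast_zero, hU.zero, hO.zero]
  | succ j ih =>
    rw [hO.natCast_succ, ih, ih, o_iter_ex3 hO, ← hO.natCast_succ, ← iter_diag hU hO j z,
      ← hU.natCast_succ]

/-- Elements of `ZMod n` act through their representatives `val ∈ [0, n)`, so only the
natural-index exchange laws are needed. -/
def iterFamily (hU : IsIteratedOp B.u U) (hO : IsIteratedOp B.o O) (n : ℕ) [NeZero n]
    (hUper : Function.Periodic U n) (hOper : Function.Periodic O n) :
    GFamilyBiquandle (Multiplicative (ZMod n)) X where
  nonempty := B.nonempty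
  u g := U g.toAdd.val
  o g := O g.toAdd.val
  diag g := iter_diag hU hO _
  uComp g h := hU.val_add hUper g.toAdd h.toAdd
  uOne x y := by simp only [toAdd_one, ZMod.val_zero, Nat.cast_zero, hU.zero]
  oComp g h := hO.val_add hOper g.toAdd h.toAdd
  oOne x y := by simp only [toAdd_one, ZMod.val_zero, Nat.cast_zero, hO.zero]
  ex1 g h x y z := by rw [mul_comm h⁻¹, inv_mul_cancel_right]; exact iter_ex1 hU hO _ _ x y z
  ex2 g h x y z := by rw [mul_comm h⁻¹, inv_mul_cancel_right]; exact iter_ex2 hU hO _ _ x y z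
  ex3 g h x y z := by rw [mul_comm h⁻¹, inv_mul_cancel_right]; exact iter_ex3 hU hO _ _ x y z

end Biquandle

/-- For a biquandle `X` of finite type `m` and `k > 0`, the iterated operations
`⟨under⟩*^{[i]}`, `⟨over⟩*^{[i]}` descend to well-defined operations indexed by
`ℤ_{km}`, making `X` a `ℤ_{km}`-family of biquandles. -/
theorem stmt_19 {X : Type*} (B : Biquandle X)
    (U O : ℤ → X → X → X)
    (hU0 : ∀ a b, U 0 a b = a) (hU1 : ∀ a b, U 1 a b = B.u a b)
    (hUrec : ∀ (i j : ℤ) (a b : X), U (i + j) a b = U j (U i a b) (U i b b))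
    (hO0 : ∀ a b, O 0 a b = a) (hO1 : ∀ a b, O 1 a b = B.o a b)
    (hOrec : ∀ (i j : ℤ) (a b : X), O (i + j) a b = O j (O i a b) (O i b b))
    (m : ℕ)
    (hm : IsLeast {n : ℕ | 0 < n ∧ ∀ a b : X, U n a b = a ∧ O n a b = a} m)
    (k : ℕ) (hk : 0 < k) :
    ∃ F : GFamilyBiquandle (Multiplicative (ZMod (k * m))) X,
      ∀ (n : ℤ) (x y : X),
        F.u (Multiplicative.ofAdd (n : ZMod (k * m))) x y = U n x y ∧
        F.o (Multiplicative.ofAdd (n : ZMod (k * m))) x y = O n x y := by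
  obtain ⟨⟨hm_pos, hm_type⟩, -⟩ := hm
  have : NeZero (k * m) := ⟨(Nat.mul_pos hk hm_pos).ne'⟩
  have hU : IsIteratedOp B.u U := ⟨hU0, hU1, hUrec⟩
  have hO : IsIteratedOp B.o O := ⟨hO0, hO1, hOrec⟩
  have hUper : Function.Periodic U (k * m : ℕ) := by
    simpa using (hU.periodic fun a b => (hm_type a b).1).nat_mul k
  have hOper : Function.Periodic O (k * m : ℕ) := by
    simpa using (hO.periodic fun a b => (hm_type a b).2).nat_mul k
  have hval (n : ℤ) : (((n : ZMod (k * m)).val : ℤ) : ZMod (k * m)) = n := by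
    push_cast [ZMod.natCast_zmod_val]; rfl
  exact ⟨Biquandle.iterFamily hU hO _ hUper hOper, fun n x y =>
    ⟨congrFun₂ (hUper.eq_of_intCast_eq (hval n)) x y,
      congrFun₂ (hOper.eq_of_intCast_eq (hval n)) x y⟩⟩
end
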